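/- arXiv:math/0510516 — 2 statements merged into one kernel-verified Lean document; each statement's English description precedes it below -/
import Mathlib

section
/- Let h : ℂ → ℂ be Hölder continuous with exponent γ ∈ (0,1] and constant A, let R > 0, 0 < δ < 1/R, z ∈ ℂ, and 0 < ε < δR. Then the integral T²_ε[h](z) = (i/(2π)) ∬_{εR ≥ |ξ−z| ≥ ε} h(ξ)/(ξ−z)² dξ̄∧dξ satisfies |T²_ε[h](z)| ≤ A·|1−i|^γ·(δR)^γ/γ. In particular the family {T²_ε[h](z)} is uniformly bounded in ε and z. -/
/-!
The rotation `ξ ↦ z + i (ξ - z)` preserves Lebesgue measure and the annulus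
`ε ≤ |ξ - z| ≤ δR`, but changes the sign of the kernel `(ξ - z)⁻²`. Hence twice the
integral equals `∫ (h ξ - h (z + i (ξ - z))) / (ξ - z)²`, whose integrand is bounded by
`A |1 - i|^γ |ξ - z|^(γ - 2)` by Hölder continuity, and in polar coordinates this majorant
integrates to `2π ((δR)^γ - ε^γ) / γ`.
-/

open MeasureTheory Complex Set
open scoped Real

theorem Complex.integral_comp_norm (g : ℝ → ℝ) :
    ∫ ξ : ℂ, g ‖ξ‖ = 2 * π * ∫ t in Ioi (0 : ℝ), t * g t := by
  rw [integral_fun_norm_addHaar volume g, Complex.finrank_real_complex, measureReal_def,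
    Complex.volume_ball]
  simp
  ring

def annulus (z : ℂ) (ε r : ℝ) : Set ℂ := Metric.closedBall z r \ Metric.ball z ε

theorem annulus_eq_preimage (z : ℂ) (ε r : ℝ) :
    annulus z ε r = (fun ξ => ‖ξ - z‖) ⁻¹' Icc ε r := by
  ext ξ
  simp [annulus, dist_eq_norm, and_comm]

theorem measurableSet_annulus (z : ℂ) (ε r : ℝ) : MeasurableSet (annulus z ε r) :=
  measurableSet_closedBall.diff measurableSet_ball

theorem isCompact_annulus (z : ℂ) (ε r : ℝ) : IsCompact (annulus z ε r) :=
  (isCompact_closedBall z r).diff Metric.isOpen_ball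

theorem sub_ne_zero_of_mem_annulus {z ξ : ℂ} {ε r : ℝ} (hε : 0 < ε) (hξ : ξ ∈ annulus z ε r) :
    ξ - z ≠ 0 := by
  rw [annulus_eq_preimage] at hξ
  exact norm_pos_iff.mp (hε.trans_le hξ.1)

theorem setIntegral_annulus_comp_norm_sub (g : ℝ → ℝ) (z : ℂ) {ε r : ℝ} (hε : 0 < ε)
    (hεr : ε ≤ r) :
    ∫ ξ in annulus z ε r, g ‖ξ - z‖ = 2 * π * ∫ t in ε..r, t * g t := by
  rw [← integral_indicator (measurableSet_annulus z ε r), annulus_eq_preimage]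
  simp_rw [← Function.comp_def g, indicator_comp_right]
  rw [integral_sub_right_eq_self (fun ξ => (Icc ε r).indicator g ‖ξ‖) z,
    Complex.integral_comp_norm, intervalIntegral.integral_of_le hεr,
    ← integral_Icc_eq_integral_Ioc]
  simp_rw [← indicator_mul_right _ (fun t => t)]
  rw [integral_indicator measurableSet_Icc, Measure.restrict_restrict measurableSet_Icc,
    inter_eq_left.mpr ((Icc_subset_Ioi_iff hεr).mpr hε)]

theorem setIntegral_annulus_norm_sub_rpow (z : ℂ) {γ ε r : ℝ} (hγ : γ ≠ 0) (hε : 0 < ε)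
    (hεr : ε ≤ r) :
    ∫ ξ in annulus z ε r, ‖ξ - z‖ ^ (γ - 2) = 2 * π * ((r ^ γ - ε ^ γ) / γ) := by
  have h0 : (0 : ℝ) ∉ uIcc ε r := by
    rw [uIcc_of_le hεr]
    exact fun h => hε.not_ge h.1
  rw [setIntegral_annulus_comp_norm_sub (· ^ (γ - 2)) z hε hεr]
  have hcongr : ∫ t in ε..r, t * t ^ (γ - 2) = ∫ t in ε..r, t ^ (γ - 1) := by
    refine intervalIntegral.integral_congr fun t ht => ?_
    have ht0 : 0 < t := by
      rw [uIcc_of_le hεr] at ht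
      exact hε.trans_le ht.1
    rw [show γ - 1 = 1 + (γ - 2) by ring, Real.rpow_add ht0, Real.rpow_one]
  rw [hcongr, integral_rpow (Or.inr ⟨by contrapose! hγ; linarith, h0⟩), sub_add_cancel]

theorem setIntegral_annulus_comp_rotate {E : Type*} [NormedAddCommGroup E] [NormedSpace ℝ E]
    (f : ℂ → E) (z : ℂ) (ε r : ℝ) {a : ℂ} (ha : ‖a‖ = 1) :
    ∫ ξ in annulus z ε r, f (z + a * (ξ - z)) = ∫ ξ in annulus z ε r, f ξ := by
  let c : Circle := ⟨a, mem_sphere_zero_iff_norm.mpr ha⟩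
  let e : ℂ ≃ₜ ℂ := (Homeomorph.subRight z).trans
    ((rotation c).toHomeomorph.trans (Homeomorph.addLeft z))
  have he : MeasurePreserving e volume volume :=
    ((measurePreserving_add_left volume z).comp
      (rotation c).measurePreserving).comp (measurePreserving_sub_right volume z)
  have he_apply (ξ : ℂ) : e ξ = z + a * (ξ - z) := by
    change z + rotation c (ξ - z) = _
    rw [rotation_apply]
  have hpre : e ⁻¹' annulus z ε r = annulus z ε r := by
    ext ξ
    simp [annulus_eq_preimage, he_apply, ha]
  simpa only [hpre, he_apply] using
    he.setIntegral_preimage_emb e.measurableEmbedding f (annulus z ε r)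

theorem continuous_of_norm_sub_le_rpow {E F : Type*} [SeminormedAddCommGroup E]
    [SeminormedAddCommGroup F] {f : E → F} {A γ : ℝ} (hγ : 0 < γ)
    (hf : ∀ x y, ‖f x - f y‖ ≤ A * ‖x - y‖ ^ γ) : Continuous f := by
  refine continuous_iff_continuousAt.mpr fun y => tendsto_sub_nhds_zero_iff.mp ?_
  refine squeeze_zero_norm (fun x => hf x y) ?_
  have hcont : Continuous fun x => A * ‖x - y‖ ^ γ := by fun_prop (disch := exact hγ.le)
  simpa [Real.zero_rpow hγ.ne'] using hcont.tendsto y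

theorem two_mul_setIntegral_annulus_div_sq {h : ℂ → ℂ} (hh : Continuous h) (z : ℂ) {ε : ℝ}
    (r : ℝ) (hε : 0 < ε) :
    2 * ∫ ξ in annulus z ε r, h ξ / (ξ - z) ^ 2 =
      ∫ ξ in annulus z ε r, (h ξ - h (z + I * (ξ - z))) / (ξ - z) ^ 2 := by
  have hint {g : ℂ → ℂ} (hg : Continuous g) :
      IntegrableOn (fun ξ => g ξ / (ξ - z) ^ 2) (annulus z ε r) :=
    (hg.continuousOn.div (by fun_prop) fun ξ hξ =>
      pow_ne_zero 2 (sub_ne_zero_of_mem_annulus hε hξ)).integrableOn_compact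
      (isCompact_annulus z ε r)
  have hrot : ∫ ξ in annulus z ε r, h (z + I * (ξ - z)) / (ξ - z) ^ 2 =
      -∫ ξ in annulus z ε r, h ξ / (ξ - z) ^ 2 := by
    rw [← setIntegral_annulus_comp_rotate (fun ξ => h ξ / (ξ - z) ^ 2) z ε r norm_I,
      ← integral_neg]
    congr with ξ
    rw [add_sub_cancel_left, mul_pow, I_sq, neg_one_mul, div_neg, neg_neg]
  simp_rw [sub_div]
  rw [integral_sub (hint hh) (hint (by fun_prop)), hrot]
  ring

theorem norm_setIntegral_annulus_div_sq_le {h : ℂ → ℂ} {γ A : ℝ} (hγ : 0 < γ)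
    (hHolder : ∀ w w' : ℂ, ‖h w - h w'‖ ≤ A * ‖w - w'‖ ^ γ) (z : ℂ) {ε r : ℝ} (hε : 0 < ε)
    (hεr : ε ≤ r) :
    ‖∫ ξ in annulus z ε r, h ξ / (ξ - z) ^ 2‖ ≤
      A * ‖(1 : ℂ) - I‖ ^ γ * π * ((r ^ γ - ε ^ γ) / γ) := by
  set C := ‖(1 : ℂ) - I‖ ^ γ
  have hpointwise : ∀ ξ ∈ annulus z ε r,
      ‖(h ξ - h (z + I * (ξ - z))) / (ξ - z) ^ 2‖ ≤ A * C * ‖ξ - z‖ ^ (γ - 2) := by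
    intro ξ hξ
    have hpos : 0 < ‖ξ - z‖ := norm_pos_iff.mpr (sub_ne_zero_of_mem_annulus hε hξ)
    have hholder := hHolder ξ (z + I * (ξ - z))
    rw [show ξ - (z + I * (ξ - z)) = (1 - I) * (ξ - z) by ring, norm_mul,
      Real.mul_rpow (norm_nonneg _) (norm_nonneg _)] at hholder
    rw [norm_div, norm_pow, div_le_iff₀ (by positivity), mul_assoc, ← Real.rpow_natCast,
      ← Real.rpow_add hpos]
    norm_num
    linarith
  have hintegrable : IntegrableOn (fun ξ => ‖ξ - z‖ ^ (γ - 2)) (annulus z ε r) :=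
    (ContinuousOn.rpow_const (by fun_prop) fun ξ hξ =>
      Or.inl (norm_ne_zero_iff.mpr (sub_ne_zero_of_mem_annulus hε hξ))).integrableOn_compact
      (isCompact_annulus z ε r)
  have h2 : 2 * ‖∫ ξ in annulus z ε r, h ξ / (ξ - z) ^ 2‖ ≤
      A * C * (2 * π * ((r ^ γ - ε ^ γ) / γ)) := by
    calc 2 * ‖∫ ξ in annulus z ε r, h ξ / (ξ - z) ^ 2‖
        = ‖∫ ξ in annulus z ε r, (h ξ - h (z + I * (ξ - z))) / (ξ - z) ^ 2‖ := by
          rw [← two_mul_setIntegral_annulus_div_sq (continuous_of_norm_sub_le_rpow hγ hHolder)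
            z r hε, norm_mul, Complex.norm_two]
      _ ≤ ∫ ξ in annulus z ε r, A * C * ‖ξ - z‖ ^ (γ - 2) :=
          norm_integral_le_of_norm_le (hintegrable.const_mul _)
            (ae_restrict_of_forall_mem (measurableSet_annulus z ε r) hpointwise)
      _ = A * C * (2 * π * ((r ^ γ - ε ^ γ) / γ)) := by
          rw [integral_const_mul, setIntegral_annulus_norm_sub_rpow z hγ.ne' hε hεr]
  linarith

theorem stmt0_general (h : ℂ → ℂ) (γ A R δ ε : ℝ) (hγ0 : 0 < γ) (hA : 0 ≤ A)
    (hHolder : ∀ w w' : ℂ, ‖h w - h w'‖ ≤ A * ‖w - w'‖ ^ γ)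
    (z : ℂ) (hε0 : 0 < ε) (hε : ε < δ * R) :
    ‖(Complex.I / (2 * (π : ℂ))) *
        ∫ ξ in Metric.closedBall z (δ * R) \ Metric.ball z ε,
          h ξ / (ξ - z) ^ 2 * (2 * Complex.I)‖
      ≤ A * ‖(1 : ℂ) - Complex.I‖ ^ γ * (δ * R) ^ γ / γ := by
  change ‖_ * ∫ ξ in annulus z ε (δ * R), _‖ ≤ _
  set J := ∫ ξ in annulus z ε (δ * R), h ξ / (ξ - z) ^ 2
  have hJ : ‖J‖ ≤ A * ‖(1 : ℂ) - I‖ ^ γ * π * (((δ * R) ^ γ - ε ^ γ) / γ) :=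
    norm_setIntegral_annulus_div_sq_le hγ0 hHolder z hε0 hε.le
  have hπ : 0 < π := Real.pi_pos
  rw [integral_mul_const, show I / (2 * π) * (J * (2 * I)) = -(J / π) by
    field_simp; rw [I_sq]; ring, norm_neg, norm_div, norm_real, Real.norm_of_nonneg hπ.le,
    div_le_iff₀ hπ]
  calc ‖J‖ ≤ A * ‖(1 : ℂ) - I‖ ^ γ * π * (((δ * R) ^ γ - ε ^ γ) / γ) := hJ
    _ ≤ A * ‖(1 : ℂ) - I‖ ^ γ * π * ((δ * R) ^ γ / γ) := by
      gcongr
      exact sub_le_self _ (Real.rpow_nonneg hε0.le γ)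
    _ = _ := by ring

/-- boundedness of the truncated Hilbert transform `T²_ε[h](z)`
for a Hölder continuous `h`. The two-form `dξ̄∧dξ` is `2i dA`. -/
theorem stmt0 (h : ℂ → ℂ) (γ A R δ ε : ℝ) (hγ0 : 0 < γ) (hγ1 : γ ≤ 1) (hA : 0 ≤ A)
    (hHolder : ∀ w w' : ℂ, ‖h w - h w'‖ ≤ A * ‖w - w'‖ ^ γ)
    (hR : 0 < R) (hδ0 : 0 < δ) (hδ : δ < 1 / R) (z : ℂ) (hε0 : 0 < ε) (hε : ε < δ * R) :
    ‖(Complex.I / (2 * (π : ℂ))) *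
        ∫ ξ in Metric.closedBall z (δ * R) \ Metric.ball z ε,
          h ξ / (ξ - z) ^ 2 * (2 * Complex.I)‖
      ≤ A * ‖(1 : ℂ) - Complex.I‖ ^ γ * (δ * R) ^ γ / γ :=
  stmt0_general h γ A R δ ε hγ0 hA hHolder z hε0 hε
end

section
/- Let h : ℂ → ℂ be continuous and compactly supported in B(0,R), with Fourier coefficients h_k(r) = (1/2π)∫₀^{2π} e^{−ikθ}h(re^{iθ})dθ. Then for any z = re^{iθ₀} with r > R and any integer k < 0: (i/(4π²)) ∫₀^{2π} ∬_{B(0,R)} h(ξ) e^{−ikθ}/(ξ − re^{iθ})² dξ̄∧dξ dθ = 2(k+1) ∫₀^R (r^k/ρ^{k+1}) h_{k+2}(ρ) dρ, while for k ≥ 0 the left-hand side vanishes. -/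
/-!
After swapping the two integrals (the integrand is continuous on `[0, 2π] × closedBall 0 R`
because `‖ξ‖ ≤ R < r`), the angular integral for fixed `ξ` is, with `z = r e^{iθ}`,
`2π r^k` times the circle average of `z^{-k} / (z - ξ)^2` over `|z| = r`.
For `k < 0` this is Cauchy's formula for the derivative of `z^{-k-1}` at `ξ`, i.e.
`-(k + 1) ξ^{-k-2}`. For `k ≥ 0` the inversion `w ↦ w⁻¹` of the unit circle turns it into the
mean of a function holomorphic on the closed unit disc and vanishing at `0`, so it is `0`.
Finally, `∫_{B(0,R)} h(ξ) ξ^m` in polar coordinates is `∫₀^R ρ^{m+1} · 2π h_{-m}(ρ)`.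
-/

open MeasureTheory Complex Set
open scoped Real

section

open Metric Real

theorem circleAverage_sub_smul_sub_sq_inv_smul_of_differentiable {E : Type*}
    [NormedAddCommGroup E] [NormedSpace ℂ E] [CompleteSpace E] {U : Set ℂ} {c w : ℂ} {R : ℝ}
    {f : ℂ → E} (hU : IsOpen U) (hc : closedBall c R ⊆ U) (hf : DifferentiableOn ℂ f U)
    (hw : w ∈ ball c R) :
    circleAverage (fun z ↦ (z - c) • ((z - w) ^ 2)⁻¹ • f z) c R = deriv f w := by
  have hR : 0 < R := pos_of_mem_ball hw
  rw [circleAverage_eq_circleIntegral hR.ne',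
    ← two_pi_I_inv_smul_circleIntegral_sub_sq_inv_smul_of_differentiable hU hc hf hw]
  congr 1
  refine circleIntegral.integral_congr hR.le fun z hz ↦ ?_
  have hz : z - c ≠ 0 := sub_ne_zero.2 (ne_of_mem_sphere hz hR.ne')
  rw [smul_smul, smul_smul, inv_mul_cancel₀ hz, one_mul]

theorem circleAverage_inv_pow_div_sub_sq (n : ℕ) {r : ℝ} {ξ : ℂ} (hξ : ‖ξ‖ < r) :
    circleAverage (fun z ↦ (z ^ n)⁻¹ / (z - ξ) ^ 2) 0 r = 0 := by
  have hr : (r : ℂ) ≠ 0 := by exact_mod_cast ((norm_nonneg ξ).trans_lt hξ).ne'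
  have hden : ∀ w ∈ closedBall (0 : ℂ) 1, (r : ℂ) - ξ * w ≠ 0 := by
    intro w hw h0
    have hw : ‖w‖ ≤ 1 := by simpa using hw
    have hξw : ‖ξ * w‖ = r := by
      rw [← sub_eq_zero.1 h0]; simp [((norm_nonneg ξ).trans_lt hξ).le]
    rw [norm_mul] at hξw
    nlinarith [norm_nonneg ξ, norm_nonneg w]
  set G : ℂ → ℂ := fun w ↦ w ^ (n + 2) / ((r : ℂ) ^ n * ((r : ℂ) - ξ * w) ^ 2)
  have hG : DiffContOnCl ℂ G (ball 0 |1|) := by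
    refine DifferentiableOn.diffContOnCl ?_
    rw [abs_one, closure_ball _ one_ne_zero]
    refine (differentiableOn_pow _).div (by fun_prop) fun w hw ↦ ?_
    exact mul_ne_zero (pow_ne_zero _ hr) (pow_ne_zero _ (hden w hw))
  rw [circleAverage_eq_circleAverage_zero_one, ← circleAverage_zero_one_congr_inv]
  calc _ = circleAverage G 0 1 := by
        refine circleAverage_congr_sphere fun w hw ↦ ?_
        rw [abs_one] at hw
        have hw0 : w ≠ 0 := ne_zero_of_mem_sphere one_ne_zero ⟨w, hw⟩
        have hrw := hden w (sphere_subset_closedBall hw)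
        simp only [G, add_zero]
        rw [show (r : ℂ) * w⁻¹ - ξ = (r - ξ * w) / w by field_simp, mul_pow, inv_pow, mul_inv,
          inv_inv, div_pow, pow_add]
        field_simp
    _ = 0 := by rw [hG.circleAverage]; simp [G]

/-- For `k = -1` the junk value `ξ ^ (-1)` on the right is killed by the factor `k + 1 = 0`. -/
theorem integral_exp_div_sub_sq {r : ℝ} {ξ : ℂ} (hξ : ‖ξ‖ < r) (k : ℤ) :
    ∫ θ in (0 : ℝ)..2 * π, exp (-I * k * θ) / (ξ - r * exp (I * θ)) ^ 2
      = if k < 0 then -(2 * π * ((k : ℂ) + 1)) * (r : ℂ) ^ k * ξ ^ (-k - 2) else 0 := by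
  have hr : (r : ℂ) ≠ 0 := by exact_mod_cast ((norm_nonneg ξ).trans_lt hξ).ne'
  have hcirc : ∀ θ : ℝ, exp (-I * k * θ) / (ξ - r * exp (I * θ)) ^ 2
      = r ^ k * ((circleMap 0 r θ) ^ (-k) / (circleMap 0 r θ - ξ) ^ 2) := by
    intro θ
    rw [circleMap_zero, mul_zpow, ← exp_int_mul, mul_div_assoc, ← mul_assoc, ← zpow_add₀ hr,
      add_neg_cancel, zpow_zero, one_mul,
      show ξ - r * exp (I * θ) = -(r * exp (θ * I) - ξ) by ring_nf, neg_sq]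
    push_cast
    ring_nf
  have havg : ∀ g : ℂ → ℂ, ∫ θ in (0 : ℝ)..2 * π, g (circleMap 0 r θ)
      = 2 * π * circleAverage g 0 r := by
    intro g
    rw [circleAverage_def, Complex.real_smul, ← mul_assoc]
    push_cast
    field_simp
  rw [intervalIntegral.integral_congr (fun θ _ ↦ hcirc θ), intervalIntegral.integral_const_mul,
    havg (fun z ↦ z ^ (-k) / (z - ξ) ^ 2)]
  cases k with
  | ofNat n =>
    simp only [Int.ofNat_eq_natCast, zpow_neg, zpow_natCast, Int.natCast_nonneg, not_lt.2,
      if_false, circleAverage_inv_pow_div_sub_sq n hξ, mul_zero]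
  | negSucc n =>
    have hcauchy := circleAverage_sub_smul_sub_sq_inv_smul_of_differentiable isOpen_univ
      (subset_univ _) (differentiable_pow n).differentiableOn (mem_ball_zero_iff.2 hξ)
    simp only [sub_zero, smul_eq_mul, deriv_pow_field] at hcauchy
    simp only [if_pos (Int.negSucc_lt_zero n), Int.neg_negSucc, zpow_natCast]
    rw [show (fun z : ℂ ↦ z ^ (n + 1) / (z - ξ) ^ 2) = fun z ↦ z * (((z - ξ) ^ 2)⁻¹ * z ^ n) by
        ext z; ring, hcauchy]
    cases n with
    | zero => simp
    | succ m =>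
      rw [show ((m + 1 + 1 : ℕ) : ℤ) - 2 = m by push_cast; ring, zpow_natCast, Int.negSucc_eq]
      push_cast
      ring

theorem intervalIntegral_setIntegral_ball_mul_exp_div_sub_sq {h : ℂ → ℂ} (hc : Continuous h)
    {R r : ℝ} (hr : R < r) (k : ℤ) :
    ∫ θ in (0 : ℝ)..2 * π, ∫ ξ in ball (0 : ℂ) R, h ξ * exp (-I * k * θ) / (ξ - r * exp (I * θ)) ^ 2
      = if k < 0 then
          -(2 * π * ((k : ℂ) + 1)) * (r : ℂ) ^ k * ∫ ξ in ball (0 : ℂ) R, h ξ * ξ ^ (-k - 2)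
        else 0 := by
  have hcont : ContinuousOn (fun p : ℝ × ℂ ↦ h p.2 * exp (-I * k * p.1) /
      (p.2 - r * exp (I * p.1)) ^ 2) (univ ×ˢ closedBall 0 R) := by
    refine ContinuousOn.div (by fun_prop) (by fun_prop) ?_
    rintro ⟨θ, ξ⟩ ⟨-, hξ⟩
    refine pow_ne_zero _ (sub_ne_zero.2 fun heq ↦ ?_)
    have hξR : ‖ξ‖ ≤ R := by simpa using hξ
    have hr0 : 0 ≤ r := ((norm_nonneg ξ).trans hξR).trans hr.le
    dsimp only at heq
    rw [heq, norm_mul, norm_exp_I_mul_ofReal, Complex.norm_real, Real.norm_of_nonneg hr0,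
      mul_one] at hξR
    linarith
  rw [intervalIntegral_integral_swap <| by
    rw [Measure.prod_restrict]
    exact ((hcont.mono (prod_mono (subset_univ _) subset_rfl)).integrableOn_compact
      (isCompact_uIcc.prod (isCompact_closedBall _ _))).mono_set
      (prod_mono uIoc_subset_uIcc ball_subset_closedBall)]
  have hinner : ∀ ξ ∈ ball (0 : ℂ) R, ∫ θ in (0 : ℝ)..2 * π,
      h ξ * exp (-I * k * θ) / (ξ - r * exp (I * θ)) ^ 2
      = h ξ * if k < 0 then -(2 * π * ((k : ℂ) + 1)) * (r : ℂ) ^ k * ξ ^ (-k - 2) else 0 := by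
    intro ξ hξ
    simp_rw [mul_div_assoc]
    rw [intervalIntegral.integral_const_mul,
      integral_exp_div_sub_sq ((mem_ball_zero_iff.1 hξ).trans hr)]
  rw [setIntegral_congr_fun measurableSet_ball hinner]
  split_ifs
  · rw [← integral_const_mul]
    exact integral_congr_ae (ae_of_all _ fun ξ ↦ by ring)
  · simp

end

theorem integral_eq_intervalIntegral_smul_integral_circleMap {E : Type*} [NormedAddCommGroup E]
    [NormedSpace ℝ E] {f : ℂ → E} {R : ℝ} (hR : 0 ≤ R) (hf : Continuous f)
    (hsupp : ∀ z : ℂ, R ≤ ‖z‖ → f z = 0) :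
    ∫ z, f z = ∫ ρ in (0 : ℝ)..R, ρ • ∫ θ in (0 : ℝ)..2 * π, f (circleMap 0 ρ θ) := by
  set g : ℝ × ℝ → E := fun p ↦ p.1 • f (circleMap 0 p.1 p.2)
  have hg : Continuous g := continuous_fst.smul (hf.comp Real.circleMap.continuous)
  have hpolar : ∀ p : ℝ × ℝ, Complex.polarCoord.symm p = circleMap 0 p.1 p.2 := fun p ↦ by
    simp [circleMap, exp_mul_I]
  have hvanish : ∀ p ∈ Ioi (0 : ℝ) ×ˢ Ioo (-π) π \ Ioc 0 R ×ˢ Ioo (-π) π, g p = 0 := by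
    rintro ⟨ρ, θ⟩ ⟨⟨hρ, hθ⟩, hnot⟩
    have hRρ : R ≤ ρ := not_lt.1 fun h ↦ hnot ⟨⟨hρ, h.le⟩, hθ⟩
    have hnorm : R ≤ ‖circleMap 0 ρ θ‖ := by rwa [norm_circleMap_zero, abs_of_pos hρ]
    simp only [g, hsupp _ hnorm, smul_zero]
  have hint : IntegrableOn g (Ioc 0 R ×ˢ Ioo (-π) π) (volume.prod volume) :=
    (hg.continuousOn.integrableOn_compact (isCompact_Icc.prod isCompact_Icc)).mono_set
      (prod_mono Ioc_subset_Icc_self Ioo_subset_Icc_self)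
  have hangle : ∀ ρ : ℝ, ∫ θ in Ioo (-π) π, g (ρ, θ)
      = ρ • ∫ θ in (0 : ℝ)..2 * π, f (circleMap 0 ρ θ) := fun ρ ↦ by
    have hper := (periodic_circleMap 0 ρ).comp f |>.intervalIntegral_add_eq (-π) 0
    rw [show -π + 2 * π = π by ring, zero_add] at hper
    rw [← integral_Ioc_eq_integral_Ioo,
      ← intervalIntegral.integral_of_le (by linarith [Real.pi_pos]),
      intervalIntegral.integral_smul]
    exact congrArg _ hper
  calc ∫ z, f z = ∫ p in Ioi (0 : ℝ) ×ˢ Ioo (-π) π, g p := by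
        rw [← Complex.integral_comp_polarCoord_symm, polarCoord_target]
        simp_rw [hpolar, g]
    _ = ∫ p in Ioc (0 : ℝ) R ×ˢ Ioo (-π) π, g p :=
        setIntegral_eq_of_subset_of_forall_sdiff_eq_zero
          (measurableSet_Ioi.prod measurableSet_Ioo) (prod_mono Ioc_subset_Ioi_self subset_rfl)
          hvanish
    _ = ∫ ρ in Ioc (0 : ℝ) R, ∫ θ in Ioo (-π) π, g (ρ, θ) := by
        rw [Measure.volume_eq_prod]; exact setIntegral_prod g hint
    _ = _ := by
        simp_rw [hangle, intervalIntegral.integral_of_le hR]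

theorem setIntegral_ball_mul_pow {h : ℂ → ℂ} {R : ℝ} (hR : 0 ≤ R) (hc : Continuous h)
    (hsupp : ∀ z : ℂ, R ≤ ‖z‖ → h z = 0) (m : ℕ) :
    ∫ ξ in Metric.ball (0 : ℂ) R, h ξ * ξ ^ m
      = ∫ ρ in (0 : ℝ)..R, (ρ : ℂ) ^ (m + 1) *
          ∫ α in (0 : ℝ)..2 * π, exp (I * m * α) * h (ρ * exp (I * α)) := by
  have hsupp' : ∀ z : ℂ, R ≤ ‖z‖ → h z * z ^ m = 0 := fun z hz ↦ by rw [hsupp z hz, zero_mul]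
  rw [setIntegral_eq_integral_of_forall_compl_eq_zero fun ξ hξ ↦ hsupp' ξ (by simpa using hξ),
    integral_eq_intervalIntegral_smul_integral_circleMap hR (by fun_prop) hsupp']
  refine intervalIntegral.integral_congr fun ρ _ ↦ ?_
  rw [Complex.real_smul, ← intervalIntegral.integral_const_mul,
    ← intervalIntegral.integral_const_mul]
  refine intervalIntegral.integral_congr fun θ _ ↦ ?_
  simp only [circleMap_zero, mul_pow, ← exp_nat_mul]
  ring_nf

/-- for continuous `h` supported in `B(0,R)` and `r > R`,
`(i/(4π²)) ∫₀^{2π} ∬_{B(0,R)} h(ξ)e^{−ikθ}/(ξ−re^{iθ})² dξ̄∧dξ dθ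
  = 2(k+1) ∫₀^R (r^k/ρ^{k+1}) h_{k+2}(ρ) dρ` for `k < 0`, and `0` for `k ≥ 0`.
Here `dξ̄∧dξ = 2i dA` and `h_{k+2}` is the angular Fourier coefficient. -/
theorem stmt9 (h : ℂ → ℂ) (R : ℝ) (hR : 0 < R) (hc : Continuous h)
    (hsupp : ∀ z : ℂ, R ≤ ‖z‖ → h z = 0) (k : ℤ) (r : ℝ) (hr : R < r) :
    (Complex.I / (4 * (π : ℂ) ^ 2)) *
        ∫ θ in (0:ℝ)..(2 * π),
          (∫ ξ in Metric.ball (0:ℂ) R,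
            h ξ * Complex.exp (-Complex.I * k * θ) /
              (ξ - r * Complex.exp (Complex.I * θ)) ^ 2 * (2 * Complex.I))
      = if k < 0 then
          2 * ((k : ℂ) + 1) *
            ∫ ρ in (0:ℝ)..R,
              ((r : ℂ) ^ k / (ρ : ℂ) ^ (k + 1)) *
                ((1 / (2 * (π : ℂ))) * ∫ α in (0:ℝ)..(2 * π),
                  Complex.exp (-Complex.I * (k + 2) * α) * h (ρ * Complex.exp (Complex.I * α)))
        else 0 := by
  simp only [integral_mul_const, intervalIntegral.integral_mul_const]
  rw [intervalIntegral_setIntegral_ball_mul_exp_div_sub_sq hc hr k]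
  split_ifs with hk
  swap
  · simp
  obtain rfl | hk : k = -1 ∨ k ≤ -2 := by omega
  · simp
  obtain ⟨m, rfl⟩ : ∃ m : ℕ, k = -((m : ℤ) + 2) := ⟨(-k - 2).toNat, by omega⟩
  have hradial : ∀ ρ : ℝ, ((r : ℂ) ^ (-((m : ℤ) + 2)) / (ρ : ℂ) ^ (-((m : ℤ) + 2) + 1)) *
      ((1 / (2 * (π : ℂ))) * ∫ α in (0 : ℝ)..2 * π,
        exp (-I * (((-((m : ℤ) + 2) : ℤ) : ℂ) + 2) * α) * h (ρ * exp (I * α)))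
      = (r : ℂ) ^ (-((m : ℤ) + 2)) / (2 * π) * ((ρ : ℂ) ^ (m + 1) *
        ∫ α in (0 : ℝ)..2 * π, exp (I * m * α) * h (ρ * exp (I * α))) := fun ρ ↦ by
    rw [div_eq_mul_inv _ ((ρ : ℂ) ^ _), ← zpow_neg,
      show -(-((m : ℤ) + 2) + 1) = ((m + 1 : ℕ) : ℤ) by push_cast; ring, zpow_natCast]
    push_cast
    ring_nf
  simp only [show -(-((m : ℤ) + 2)) - 2 = m by ring, zpow_natCast]
  rw [setIntegral_ball_mul_pow hR.le hc hsupp,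
    intervalIntegral.integral_congr fun ρ _ ↦ hradial ρ, intervalIntegral.integral_const_mul]
  generalize (∫ ρ in (0 : ℝ)..R, _ : ℂ) = S
  have hπ : (π : ℂ) ≠ 0 := by exact_mod_cast Real.pi_ne_zero
  field_simp
  push_cast
  linear_combination (4 * ((m : ℂ) + 1) * (r : ℂ) ^ (-((m : ℤ) + 2)) * S) * I_sq
end
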